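/- arXiv:1210.1429 — 4 statements merged into one kernel-verified Lean document; each statement's English description precedes it below -/
import Mathlib

section
/- Let C be a bounded chain complex of finite-dimensional vector spaces over ℤ/2 and suppose the differential d_{p+1} : C_{p+1} → C_p is nonzero for some degree p. Then there exists a bounded chain complex C' of finite-dimensional ℤ/2-vector spaces and a chain homotopy equivalence between C and C' such that dim C'_{p+1} = dim C_{p+1} − 1, dim C'_p = dim C_p − 1, and C'_i is isomorphic to C_i for all i ∉ {p, p+1}. (A single algebraic Morse matching, in the sense of Kozlov, removes one matched pair of basis elements while preserving the chain homotopy type.) -/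
/-!
Choose `v ∈ C_{p+1}` and a functional `φ` on `C_p` with `φ (d v) = 1`. The degree-one map
`h x = φ x • v` from `C_p` to `C_{p+1}` gives the null-homotopic chain map `c = d h + h d`, which is
`x ↦ φ x • d v` on `C_p`, `y ↦ φ (d y) • v` on `C_{p+1}` and zero elsewhere; it is idempotent
because `φ (d v) = 1`. So `π = 1 - c` is an idempotent chain map homotopic to the identity, and `C`
is homotopy equivalent to the subcomplex `range π`, which is `ker φ` in degree `p`, `ker (φ ∘ d)` in
degree `p + 1`, and all of `C_i` elsewhere.
-/

open CategoryTheory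

namespace LinearMap

variable {R M : Type*} [CommRing R] [AddCommGroup M] [Module R M] {f : M →ₗ[R] R} {w : M}

theorem smulRight_comp_smulRight_of_apply_eq_one (h : f w = 1) :
    f.smulRight w ∘ₗ f.smulRight w = f.smulRight w := by
  ext x
  simp [h]

theorem range_id_sub_smulRight_of_apply_eq_one (h : f w = 1) :
    range (id - f.smulRight w) = ker f := by
  apply le_antisymm
  · rintro _ ⟨x, rfl⟩
    simp [h]
  · intro x hx
    exact ⟨x, by simp [mem_ker.mp hx]⟩

theorem finrank_range_id_sub_smulRight_of_apply_eq_one {K V : Type*} [Field K] [AddCommGroup V]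
    [Module K V] [FiniteDimensional K V] {f : V →ₗ[K] K} {w : V} (h : f w = 1) :
    Module.finrank K (range (id - f.smulRight w)) = Module.finrank K V - 1 := by
  have hf : f ≠ 0 := fun hf => by simp [hf] at h
  rw [range_id_sub_smulRight_of_apply_eq_one h, ← Module.Dual.finrank_ker_add_one_of_ne_zero hf,
    Nat.add_sub_cancel]

theorem exists_apply_apply_eq_one_of_ne_zero {K V W : Type*} [Field K] [AddCommGroup V]
    [Module K V] [AddCommGroup W] [Module K W] {g : V →ₗ[K] W} (hg : g ≠ 0) :
    ∃ (φ : W →ₗ[K] K) (v : V), φ (g v) = 1 := by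
  obtain ⟨v, hv⟩ : ∃ v, g v ≠ 0 := by
    by_contra! h
    exact hg (ext h)
  obtain ⟨φ, hφ⟩ := Module.Projective.exists_dual_eq_one K hv
  exact ⟨φ, v, hφ⟩

end LinearMap

namespace HomologicalComplex

variable {R : Type*} [Ring R] {ι : Type*} {c : ComplexShape ι}

@[simp]
theorem d_d_apply (C : HomologicalComplex (ModuleCat R) c) (i j k : ι) (x : C.X i) :
    C.d j k (C.d i j x) = 0 :=
  LinearMap.congr_fun (ModuleCat.hom_ext_iff.mp (C.d_comp_d i j k)) x

theorem Hom.comm_apply {C D : HomologicalComplex (ModuleCat R) c} (f : C ⟶ D) (i j : ι)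
    (x : C.X i) : D.d i j (f.f i x) = f.f j (C.d i j x) :=
  LinearMap.congr_fun (ModuleCat.hom_ext_iff.mp (f.comm i j)) x

variable {C : HomologicalComplex (ModuleCat R) c} (e : C ⟶ C)

def rangeSubcomplex : HomologicalComplex (ModuleCat R) c where
  X i := ModuleCat.of R (LinearMap.range (e.f i).hom)
  d i j := ModuleCat.ofHom <| (C.d i j).hom.restrict fun _ ⟨y, hy⟩ =>
    ⟨C.d i j y, by rw [← hy, Hom.comm_apply]⟩
  shape i j hij := by
    ext x
    change C.d i j x = 0
    rw [C.shape i j hij]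
    rfl
  d_comp_d' i j k _ _ := by ext x; simp

theorem finrank_rangeSubcomplex_X (i : ι) :
    Module.finrank R ((rangeSubcomplex e).X i) = Module.finrank R (LinearMap.range (e.f i).hom) :=
  rfl

instance {i : ι} [Module.Finite R (C.X i)] : Module.Finite R ((rangeSubcomplex e).X i) :=
  inferInstanceAs (Module.Finite R (LinearMap.range (e.f i).hom))

instance {i : ι} [Subsingleton (C.X i)] : Subsingleton ((rangeSubcomplex e).X i) :=
  inferInstanceAs (Subsingleton (LinearMap.range (e.f i).hom))

def rangeSubcomplexι : rangeSubcomplex e ⟶ C where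
  f i := ModuleCat.ofHom (LinearMap.range (e.f i).hom).subtype

def toRangeSubcomplex : C ⟶ rangeSubcomplex e where
  f i := ModuleCat.ofHom (e.f i).hom.rangeRestrict
  comm' i j _ := by ext x; exact Subtype.ext (e.comm_apply i j x)

variable {e}

theorem rangeSubcomplexι_comp_toRangeSubcomplex (he : e ≫ e = e) :
    rangeSubcomplexι e ≫ toRangeSubcomplex e = 𝟙 _ := by
  ext i ⟨_, y, rfl⟩
  exact Subtype.ext (LinearMap.congr_fun (ModuleCat.hom_ext_iff.mp (congr_hom he i)) y)

def rangeSubcomplexXIso {i : ι} (h : e.f i = 𝟙 _) : (rangeSubcomplex e).X i ≅ C.X i :=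
  (LinearEquiv.ofTop _ (by rw [h, ModuleCat.hom_id, LinearMap.range_id])).toModuleIso

def homotopyEquivRangeSubcomplex (he : e ≫ e = e) (H : Homotopy e (𝟙 C)) :
    HomotopyEquiv C (rangeSubcomplex e) where
  hom := toRangeSubcomplex e
  inv := rangeSubcomplexι e
  homotopyHomInvId := H
  homotopyInvHomId := Homotopy.ofEq (rangeSubcomplexι_comp_toRangeSubcomplex he)

end HomologicalComplex

namespace ChainComplex

variable {R : Type*} [CommRing R] (C : ChainComplex (ModuleCat R) ℤ) (p : ℤ)
  (φ : C.X p →ₗ[R] R) (v : C.X (p + 1))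

def morseHomotopy (i j : ℤ) (hij : (ComplexShape.down ℤ).Rel j i) : C.X i ⟶ C.X j :=
  if hi : i = p then
    (C.XIsoOfEq hi).hom ≫ ModuleCat.ofHom (φ.smulRight v) ≫
      (C.XIsoOfEq (by simpa [hi] using hij)).hom
  else 0

noncomputable def morseCorrection : C ⟶ C :=
  Homotopy.nullHomotopicMap' (morseHomotopy C p φ v)

noncomputable def morseProjection : C ⟶ C :=
  𝟙 C - morseCorrection C p φ v

noncomputable def homotopyMorseProjection : Homotopy (morseProjection C p φ v) (𝟙 C) :=
  (Homotopy.equivSubZero.symm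
    ((Homotopy.ofEq (sub_sub_cancel _ _)).trans (Homotopy.nullHomotopy' _))).symm

variable {C p φ v}

theorem morseCorrection_f (i : ℤ) :
    (morseCorrection C p φ v).f i =
      C.d i (i - 1) ≫ morseHomotopy C p φ v (i - 1) i (by simp) +
        morseHomotopy C p φ v i (i + 1) rfl ≫ C.d (i + 1) i :=
  Homotopy.nullHomotopicMap'_f _ _ _

theorem morseCorrection_f_self :
    ((morseCorrection C p φ v).f p).hom = φ.smulRight (C.d (p + 1) p v) := by
  ext x
  simp [morseCorrection_f, morseHomotopy]

theorem morseCorrection_f_succ :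
    ((morseCorrection C p φ v).f (p + 1)).hom = (φ ∘ₗ (C.d (p + 1) p).hom).smulRight v := by
  ext x
  simp [morseCorrection_f, morseHomotopy]

theorem morseCorrection_f_of_ne {i : ℤ} (hp : i ≠ p) (hp' : i ≠ p + 1) :
    (morseCorrection C p φ v).f i = 0 := by
  simp [morseCorrection_f, morseHomotopy, hp, show i - 1 ≠ p by omega]

theorem morseCorrection_comp_self (h : φ (C.d (p + 1) p v) = 1) :
    morseCorrection C p φ v ≫ morseCorrection C p φ v = morseCorrection C p φ v := by
  ext i : 1
  rw [HomologicalComplex.comp_f]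
  by_cases hp : i = p
  · subst hp
    ext : 1
    rw [ModuleCat.hom_comp, morseCorrection_f_self]
    exact LinearMap.smulRight_comp_smulRight_of_apply_eq_one h
  by_cases hp' : i = p + 1
  · subst hp'
    ext : 1
    rw [ModuleCat.hom_comp, morseCorrection_f_succ]
    exact LinearMap.smulRight_comp_smulRight_of_apply_eq_one h
  · rw [morseCorrection_f_of_ne hp hp', Limits.zero_comp]

theorem morseProjection_comp_self (h : φ (C.d (p + 1) p v) = 1) :
    morseProjection C p φ v ≫ morseProjection C p φ v = morseProjection C p φ v := by
  simp only [morseProjection, Preadditive.sub_comp, Preadditive.comp_sub, Category.id_comp,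
    Category.comp_id, morseCorrection_comp_self h]
  abel

theorem morseProjection_f_self :
    ((morseProjection C p φ v).f p).hom = LinearMap.id - φ.smulRight (C.d (p + 1) p v) := by
  simp [morseProjection, morseCorrection_f_self]

theorem morseProjection_f_succ :
    ((morseProjection C p φ v).f (p + 1)).hom =
      LinearMap.id - (φ ∘ₗ (C.d (p + 1) p).hom).smulRight v := by
  simp [morseProjection, morseCorrection_f_succ]

theorem morseProjection_f_of_ne {i : ℤ} (hp : i ≠ p) (hp' : i ≠ p + 1) :
    (morseProjection C p φ v).f i = 𝟙 _ := by
  simp [morseProjection, morseCorrection_f_of_ne hp hp']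

end ChainComplex

/-- A single algebraic Morse matching: if `C` is a bounded chain complex of
finite-dimensional `ℤ/2`-vector spaces whose differential `d : C_{p+1} → C_p` is
nonzero, then there is a bounded chain complex `C'` of finite-dimensional
`ℤ/2`-vector spaces chain homotopy equivalent to `C` with
`dim C'_{p+1} = dim C_{p+1} − 1`, `dim C'_p = dim C_p − 1`, and `C'_i ≅ C_i` for
all other degrees `i`. -/
theorem single_morse_matching
    (C : ChainComplex (ModuleCat (ZMod 2)) ℤ)
    (hfin : ∀ i : ℤ, FiniteDimensional (ZMod 2) (C.X i))
    (hbdd : ∃ N : ℤ, ∀ i : ℤ, N < |i| → Subsingleton (C.X i))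
    (p : ℤ) (hd : C.d (p + 1) p ≠ 0) :
    ∃ C' : ChainComplex (ModuleCat (ZMod 2)) ℤ,
      (∀ i : ℤ, FiniteDimensional (ZMod 2) (C'.X i)) ∧
      (∃ N : ℤ, ∀ i : ℤ, N < |i| → Subsingleton (C'.X i)) ∧
      Nonempty (HomotopyEquiv C C') ∧
      Module.finrank (ZMod 2) (C'.X (p + 1)) = Module.finrank (ZMod 2) (C.X (p + 1)) - 1 ∧
      Module.finrank (ZMod 2) (C'.X p) = Module.finrank (ZMod 2) (C.X p) - 1 ∧
      ∀ i : ℤ, i ≠ p → i ≠ p + 1 → Nonempty (C'.X i ≅ C.X i) := by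
  obtain ⟨N, hN⟩ := hbdd
  obtain ⟨φ, v, h⟩ := LinearMap.exists_apply_apply_eq_one_of_ne_zero
    (fun h ↦ hd (ModuleCat.hom_ext h))
  refine ⟨HomologicalComplex.rangeSubcomplex (C.morseProjection p φ v), fun i ↦ ?_,
    ⟨N, fun i hi ↦ ?_⟩, ?_, ?_, ?_, ?_⟩
  · have := hfin i
    infer_instance
  · have := hN i hi
    infer_instance
  · exact ⟨HomologicalComplex.homotopyEquivRangeSubcomplex
      (ChainComplex.morseProjection_comp_self h) (C.homotopyMorseProjection p φ v)⟩
  · have := hfin (p + 1)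
    rw [HomologicalComplex.finrank_rangeSubcomplex_X, ChainComplex.morseProjection_f_succ]
    exact LinearMap.finrank_range_id_sub_smulRight_of_apply_eq_one h
  · have := hfin p
    rw [HomologicalComplex.finrank_rangeSubcomplex_X, ChainComplex.morseProjection_f_self]
    exact LinearMap.finrank_range_id_sub_smulRight_of_apply_eq_one h
  · exact fun i hp hp' ↦
      ⟨HomologicalComplex.rangeSubcomplexXIso (ChainComplex.morseProjection_f_of_ne hp hp')⟩
end

section
/- Let D be an n×n matrix over ℤ/2. Then there exists an upper-triangular n×n matrix V over ℤ/2 with all diagonal entries equal to 1 such that the matrix R = D·V is reduced, i.e., the nonzero columns of R have pairwise distinct lowest-one positions. (The standard persistence matrix-reduction algorithm, Algorithm 1, always succeeds.) -/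
/-- The `j`-th column of the matrix `R`. -/
def column {n : ℕ} (R : Matrix (Fin n) (Fin n) (ZMod 2)) (j : Fin n) : Fin n → ZMod 2 :=
  fun i => R i j

/-- `low v` is the largest index at which the vector `v` over `ℤ/2` is nonzero
(`⊥` if `v = 0`). -/
def low {n : ℕ} (v : Fin n → ZMod 2) : WithBot (Fin n) :=
  (Finset.univ.filter (fun i => v i ≠ 0)).max

/-- `lowM R j` is the lowest-one position of the `j`-th column of `R`. -/
def lowM {n : ℕ} (R : Matrix (Fin n) (Fin n) (ZMod 2)) (j : Fin n) : WithBot (Fin n) :=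
  low (column R j)

/-- A matrix over `ℤ/2` is reduced if its nonzero columns have pairwise distinct
lowest-one positions. -/
def ReducedMat {n : ℕ} (R : Matrix (Fin n) (Fin n) (ZMod 2)) : Prop :=
  ∀ j k : Fin n, j ≠ k → column R j ≠ 0 → column R k ≠ 0 → lowM R j ≠ lowM R k

/-- A matrix is upper-triangular with all diagonal entries equal to `1`. -/
def IsUpperUnitriangular {n : ℕ} (V : Matrix (Fin n) (Fin n) (ZMod 2)) : Prop :=
  (∀ i j : Fin n, j < i → V i j = 0) ∧ ∀ i : Fin n, V i i = 1


/-!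
Adding column `j` to a later column `k` is right multiplication by the upper unitriangular
matrix `1 + E_jk`. If two nonzero columns share their lowest one, such an addition strictly
lowers the low of column `k` and leaves every other column alone. The vectors of lows form a
finite poset under the pointwise order, so a unitriangular `V` for which the lows of `D * V`
are minimal leaves no such conflict, i.e. `D * V` is reduced.
-/

open Matrix

section Low

variable {n : ℕ} {v w : Fin n → ZMod 2}

lemma low_eq_bot_iff : low v = ⊥ ↔ v = 0 := by
  simp [low, Finset.max_eq_bot, Finset.filter_eq_empty_iff, funext_iff]

lemma low_lt_coe_iff {l : Fin n} : low v < l ↔ ∀ i, l ≤ i → v i = 0 := by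
  simp only [low, Finset.max, Finset.sup_lt_iff (WithBot.bot_lt_coe l), Finset.mem_filter,
    Finset.mem_univ, true_and, WithBot.coe_lt_coe]
  exact forall_congr' fun i => by rw [← not_imp_not, not_lt, not_not]

lemma apply_low_ne_zero {l : Fin n} (h : low v = l) : v l ≠ 0 := by
  simpa using Finset.mem_of_max h

lemma apply_eq_zero_of_low_lt {l i : Fin n} (h : low v = l) (hi : l < i) : v i = 0 :=
  low_lt_coe_iff.mp (h ▸ WithBot.coe_lt_coe.mpr hi) i le_rfl

lemma low_add_lt_of_low_eq (hv : v ≠ 0) (h : low v = low w) : low (v + w) < low v := by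
  obtain ⟨l, hl⟩ := WithBot.ne_bot_iff_exists.mp (mt low_eq_bot_iff.mp hv)
  have hw : low w = l := h ▸ hl.symm
  have nonzero_add_nonzero : ∀ a b : ZMod 2, a ≠ 0 → b ≠ 0 → a + b = 0 := by decide
  rw [← hl, low_lt_coe_iff]
  intro i hi
  rcases hi.lt_or_eq with hlt | rfl
  · simp [apply_eq_zero_of_low_lt hl.symm hlt, apply_eq_zero_of_low_lt hw hlt]
  · exact nonzero_add_nonzero _ _ (apply_low_ne_zero hl.symm) (apply_low_ne_zero hw)

end Low

section ColumnAddition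

variable {n : ℕ}

lemma column_mul_one_add_single (R : Matrix (Fin n) (Fin n) (ZMod 2)) (j k : Fin n) :
    column (R * (1 + single j k 1)) = Function.update (column R) k (column R k + column R j) := by
  funext m i
  rcases eq_or_ne m k with rfl | hm
  · simp [column, Matrix.mul_add, add_comm]
  · simp [column, Matrix.mul_add, hm, mul_single_apply_of_ne]

lemma lowM_mul_one_add_single (R : Matrix (Fin n) (Fin n) (ZMod 2)) (j k : Fin n) :
    lowM (R * (1 + single j k 1)) = Function.update (lowM R) k (low (column R k + column R j)) := by
  funext m
  rcases eq_or_ne m k with rfl | hm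
  · simp [lowM, column_mul_one_add_single]
  · simp [lowM, column_mul_one_add_single, hm]

lemma lowM_mul_one_add_single_lt {R : Matrix (Fin n) (Fin n) (ZMod 2)} {j k : Fin n}
    (hk : column R k ≠ 0) (h : lowM R j = lowM R k) :
    lowM (R * (1 + single j k 1)) < lowM R := by
  rw [lowM_mul_one_add_single, update_lt_self_iff]
  exact low_add_lt_of_low_eq hk h.symm

lemma exists_lt_of_not_reducedMat {R : Matrix (Fin n) (Fin n) (ZMod 2)} (h : ¬ ReducedMat R) :
    ∃ j k, j < k ∧ column R k ≠ 0 ∧ lowM R j = lowM R k := by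
  simp only [ReducedMat, not_forall, not_not] at h
  obtain ⟨j, k, hjk, hj, hk, hlow⟩ := h
  rcases hjk.lt_or_gt with hlt | hgt
  · exact ⟨j, k, hlt, hk, hlow⟩
  · exact ⟨k, j, hgt, hj, hlow.symm⟩

end ColumnAddition

section Unitriangular

variable {n : ℕ} {A B : Matrix (Fin n) (Fin n) (ZMod 2)}

lemma isUpperUnitriangular_one : IsUpperUnitriangular (1 : Matrix (Fin n) (Fin n) (ZMod 2)) :=
  ⟨fun _ _ h => one_apply_ne h.ne', one_apply_eq⟩

lemma isUpperUnitriangular_one_add_single {j k : Fin n} (hjk : j < k) :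
    IsUpperUnitriangular (1 + single j k (1 : ZMod 2)) := by
  refine ⟨fun i m hmi => ?_, fun i => ?_⟩
  · have : ¬ (j = i ∧ k = m) := by rintro ⟨rfl, rfl⟩; exact (hjk.trans hmi).false
    simp [one_apply_ne hmi.ne', this]
  · have : ¬ (j = i ∧ k = i) := by rintro ⟨rfl, rfl⟩; exact hjk.false
    simp [this]

lemma IsUpperUnitriangular.mul (hA : IsUpperUnitriangular A) (hB : IsUpperUnitriangular B) :
    IsUpperUnitriangular (A * B) := by
  refine ⟨fun i j hji => ?_, fun i => ?_⟩
  · exact BlockTriangular.mul (b := id) (fun i j h => hA.1 i j h) (fun i j h => hB.1 i j h) hji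
  · rw [mul_apply, Finset.sum_eq_single i, hA.2, hB.2, one_mul]
    · intro p _ hp
      rcases hp.lt_or_gt with h | h
      · rw [hA.1 i p h, zero_mul]
      · rw [hB.1 p i h, mul_zero]
    · simp

end Unitriangular

/-- The standard persistence matrix-reduction algorithm always succeeds: every square
matrix `D` over `ℤ/2` admits an upper-triangular matrix `V` with unit diagonal such
that `R = D·V` is reduced. -/
theorem exists_reduction {n : ℕ} (D : Matrix (Fin n) (Fin n) (ZMod 2)) :
    ∃ V : Matrix (Fin n) (Fin n) (ZMod 2),
      IsUpperUnitriangular V ∧ ReducedMat (D * V) := by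
  obtain ⟨V, hV, hmin⟩ := (InvImage.wf (fun V => lowM (D * V)) wellFounded_lt).has_min
    {V | IsUpperUnitriangular V} ⟨1, isUpperUnitriangular_one⟩
  refine ⟨V, hV, by_contra fun hred => ?_⟩
  obtain ⟨j, k, hjk, hk, hlow⟩ := exists_lt_of_not_reducedMat hred
  have hlt := lowM_mul_one_add_single_lt hk hlow
  rw [Matrix.mul_assoc] at hlt
  exact hmin _ (hV.mul (isUpperUnitriangular_one_add_single hjk)) hlt
end

section
/- Let D be an n×n matrix over ℤ/2 and let V₁, V₂ be upper-triangular n×n matrices over ℤ/2 with all diagonal entries equal to 1 such that both R₁ = D·V₁ and R₂ = D·V₂ are reduced. Then for every index j, the column R₁_j is zero if and only if the column R₂_j is zero, and if both are nonzero then low(R₁, j) = low(R₂, j). (Uniqueness of the lowest-one pairing: the persistence information read off the reduced matrix does not depend on the order of column additions.) -/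
namespace LowPairingAux

variable {n : ℕ}

lemma low_eq_coe {v : Fin n → ZMod 2} {i : Fin n}
    (h1 : v i ≠ 0) (h2 : ∀ i', i < i' → v i' = 0) : low v = ↑i := by
  apply le_antisymm
  · apply Finset.max_le
    intro a ha
    simp only [Finset.mem_filter, Finset.mem_univ, true_and] at ha
    by_contra hcon
    rw [not_le, WithBot.coe_lt_coe] at hcon
    exact ha (h2 a hcon)
  · exact Finset.le_max (by simp [h1])

lemma entry_eq_zero_of_low_lt {v : Fin n → ZMod 2} {i : Fin n} (h : low v < ↑i) : v i = 0 := by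
  by_contra hv
  exact absurd (Finset.le_max (s := Finset.univ.filter (fun i => v i ≠ 0)) (by simp [hv]))
    (not_le.mpr h)

lemma exists_low_of_ne_zero {v : Fin n → ZMod 2} (h : v ≠ 0) :
    ∃ i : Fin n, low v = ↑i ∧ v i ≠ 0 := by
  have hne : (Finset.univ.filter (fun i => v i ≠ 0)).Nonempty := by
    obtain ⟨i, hi⟩ := Function.ne_iff.mp h
    exact ⟨i, by simpa using hi⟩
  obtain ⟨a, ha⟩ := Finset.max_of_nonempty hne
  have := Finset.mem_of_max ha
  simp only [Finset.mem_filter, Finset.mem_univ, true_and] at this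
  exact ⟨a, ha, this⟩

/-- The span of the columns of `R` indexed by `s`. -/
def spanCols (R : Matrix (Fin n) (Fin n) (ZMod 2)) (s : Finset (Fin n)) :
    Submodule (ZMod 2) (Fin n → ZMod 2) :=
  Submodule.span (ZMod 2) (Set.range fun k : {k // k ∈ s} => column R k.1)

lemma column_mem_spanCols (R : Matrix (Fin n) (Fin n) (ZMod 2)) {s : Finset (Fin n)}
    {k : Fin n} (hk : k ∈ s) : column R k ∈ spanCols R s :=
  Submodule.subset_span ⟨⟨k, hk⟩, rfl⟩

lemma mem_spanCols_iff {R : Matrix (Fin n) (Fin n) (ZMod 2)} {s : Finset (Fin n)}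
    {v : Fin n → ZMod 2} :
    v ∈ spanCols R s ↔ ∃ c : {k // k ∈ s} → ZMod 2, ∑ k, c k • column R k.1 = v :=
  Submodule.mem_span_range_iff_exists_fun (ZMod 2)

/-- In a reduced matrix, the low of any nonzero vector in the span of a set of
columns is the low of one of the nonzero columns in that set. -/
lemma low_mem_span {R : Matrix (Fin n) (Fin n) (ZMod 2)} (hred : ReducedMat R)
    {s : Finset (Fin n)} {v : Fin n → ZMod 2} (hv : v ∈ spanCols R s) (hv0 : v ≠ 0) :
    ∃ k ∈ s, column R k ≠ 0 ∧ lowM R k = low v := by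
  obtain ⟨c, hc⟩ := mem_spanCols_iff.mp hv
  classical
  set T : Finset {k // k ∈ s} :=
    Finset.univ.filter (fun k => c k ≠ 0 ∧ column R k.1 ≠ 0) with hT
  have hvsum : ∑ k ∈ T, c k • column R k.1 = v := by
    rw [← hc]
    apply Finset.sum_subset (Finset.subset_univ T)
    intro k _ hk
    simp only [hT, Finset.mem_filter, Finset.mem_univ, true_and, not_and_or, not_not] at hk
    rcases hk with h | h
    · rw [h, zero_smul]
    · rw [h, smul_zero]
  have hTne : T.Nonempty := by
    rcases Finset.eq_empty_or_nonempty T with h | h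
    · exfalso; apply hv0; rw [← hvsum, h, Finset.sum_empty]
    · exact h
  obtain ⟨k₀, hk₀T, hk₀max⟩ := Finset.exists_max_image T (fun k => lowM R k.1) hTne
  have hk₀ : c k₀ ≠ 0 ∧ column R k₀.1 ≠ 0 := by
    simpa [hT] using hk₀T
  obtain ⟨i₀, hlow₀, hent₀⟩ := exists_low_of_ne_zero hk₀.2
  have hlowM₀ : lowM R k₀.1 = ↑i₀ := hlow₀
  -- entries of other columns of T vanish at i₀ and above
  have habove : ∀ k ∈ T, ∀ i : Fin n, i₀ < i → column R k.1 i = 0 := by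
    intro k hk i hi
    apply entry_eq_zero_of_low_lt
    calc low (column R k.1) = lowM R k.1 := rfl
      _ ≤ lowM R k₀.1 := hk₀max k hk
      _ = ↑i₀ := hlowM₀
      _ < ↑i := WithBot.coe_lt_coe.mpr hi
  have hat : ∀ k ∈ T, k ≠ k₀ → column R k.1 i₀ = 0 := by
    intro k hk hne
    have hkc : c k ≠ 0 ∧ column R k.1 ≠ 0 := by simpa [hT] using hk
    have hne1 : k.1 ≠ k₀.1 := fun h => hne (Subtype.ext h)
    have hlt : lowM R k.1 < ↑i₀ := by
      rcases lt_or_eq_of_le (hk₀max k hk) with h | h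
      · rwa [hlowM₀] at h
      · exact absurd h (hred k.1 k₀.1 hne1 hkc.2 hk₀.2)
    exact entry_eq_zero_of_low_lt hlt
  have hvlow : low v = ↑i₀ := by
    apply low_eq_coe
    · have : v i₀ = c k₀ * column R k₀.1 i₀ := by
        rw [← hvsum, Finset.sum_apply]
        rw [Finset.sum_eq_single k₀]
        · simp [smul_eq_mul]
        · intro k hk hne
          simp [hat k hk hne]
        · intro h; exact absurd hk₀T h
      rw [this]
      exact mul_ne_zero hk₀.1 hent₀
    · intro i hi
      rw [← hvsum, Finset.sum_apply]
      apply Finset.sum_eq_zero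
      intro k hk
      simp [habove k hk i hi]
  exact ⟨k₀.1, k₀.2, hk₀.2, by rw [hvlow]; exact hlowM₀⟩

lemma column_mul (D V : Matrix (Fin n) (Fin n) (ZMod 2)) (k : Fin n) :
    column (D * V) k = ∑ m, V m k • column D m := by
  funext i
  simp only [column, Matrix.mul_apply, Finset.sum_apply, Pi.smul_apply, smul_eq_mul]
  exact Finset.sum_congr rfl fun m _ => mul_comm _ _

lemma spanCols_mul (D V : Matrix (Fin n) (Fin n) (ZMod 2)) (hV : IsUpperUnitriangular V)
    {s : Finset (Fin n)} (hs : ∀ k ∈ s, ∀ m, m ≤ k → m ∈ s) :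
    spanCols (D * V) s = spanCols D s := by
  classical
  have hcolrepr : ∀ k : Fin n,
      column (D * V) k = column D k + ∑ m ∈ Finset.Iio k, V m k • column D m := by
    intro k
    rw [column_mul]
    rw [← Finset.sum_subset (Finset.subset_univ (Finset.Iic k))
      (fun m _ hm => by
        rw [hV.1 m k (by simpa using hm), zero_smul])]
    rw [← Finset.Iio_insert, Finset.sum_insert (by simp), hV.2 k, one_smul]
  have hself : ∀ w : Fin n → ZMod 2, w + w = 0 := by
    intro w
    funext i
    have h2 : (2 : ZMod 2) = 0 := rfl
    have : w i + w i = 2 * w i := by ring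
    rw [Pi.add_apply, this, h2, zero_mul, Pi.zero_apply]
  apply le_antisymm
  · apply Submodule.span_le.mpr
    rintro _ ⟨⟨k, hk⟩, rfl⟩
    show column (D * V) k ∈ (spanCols D s : Set _)
    rw [column_mul]
    apply Submodule.sum_mem
    intro m _
    by_cases h : m ≤ k
    · exact Submodule.smul_mem _ _ (column_mem_spanCols D (hs k hk m h))
    · rw [hV.1 m k (not_le.mp h), zero_smul]
      exact Submodule.zero_mem _
  · apply Submodule.span_le.mpr
    rintro _ ⟨⟨k, hk⟩, rfl⟩
    show column D k ∈ (spanCols (D * V) s : Set _)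
    have key : ∀ N : ℕ, ∀ k : Fin n, (k : ℕ) < N → k ∈ s →
        column D k ∈ spanCols (D * V) s := by
      intro N
      induction N with
      | zero => intro k hk; omega
      | succ N ih =>
        intro k hkN hk
        have hrepr : column D k
            = column (D * V) k + ∑ m ∈ Finset.Iio k, V m k • column D m := by
          rw [hcolrepr k, add_assoc, hself, add_zero]
        rw [hrepr]
        apply Submodule.add_mem
        · exact column_mem_spanCols (D * V) hk
        · apply Submodule.sum_mem
          intro m hm
          have hmk : m < k := Finset.mem_Iio.mp hm
          exact Submodule.smul_mem _ _
            (ih m (by omega) (hs k hk m hmk.le))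
    exact key ((k : ℕ) + 1) k (by omega) hk

/-- Characterization of `lowM R j = i` purely in terms of the column spans. -/
lemma claimC {R : Matrix (Fin n) (Fin n) (ZMod 2)} (hred : ReducedMat R) (j i : Fin n) :
    (column R j ≠ 0 ∧ lowM R j = ↑i) ↔
      ((∃ v ∈ spanCols R (Finset.Iic j), v ≠ 0 ∧ low v = ↑i) ∧
        ∀ v ∈ spanCols R (Finset.Iio j), v ≠ 0 → low v ≠ ↑i) := by
  constructor
  · rintro ⟨hne, hlow⟩
    refine ⟨⟨column R j, column_mem_spanCols R (Finset.mem_Iic.mpr le_rfl), hne, hlow⟩, ?_⟩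
    intro v hv hv0 hvlow
    obtain ⟨k, hk, hkne, hklow⟩ := low_mem_span hred hv hv0
    have hkj : k ≠ j := fun h => absurd (Finset.mem_Iio.mp hk) (by rw [h]; exact lt_irrefl j)
    exact hred k j hkj hkne hne (by rw [hklow, hvlow, hlow])
  · rintro ⟨⟨v, hv, hv0, hvlow⟩, hno⟩
    obtain ⟨k, hk, hkne, hklow⟩ := low_mem_span hred hv hv0
    rw [hvlow] at hklow
    by_cases hkj : k = j
    · subst hkj; exact ⟨hkne, hklow⟩
    · exfalso
      have hklt : k < j := lt_of_le_of_ne (Finset.mem_Iic.mp hk) hkj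
      exact hno (column R k) (column_mem_spanCols R (Finset.mem_Iio.mpr hklt)) hkne hklow

lemma key_lemma {R₁ R₂ : Matrix (Fin n) (Fin n) (ZMod 2)}
    (h1 : ReducedMat R₁) (h2 : ReducedMat R₂) (j : Fin n)
    (hIic : spanCols R₁ (Finset.Iic j) = spanCols R₂ (Finset.Iic j))
    (hIio : spanCols R₁ (Finset.Iio j) = spanCols R₂ (Finset.Iio j))
    (hne : column R₁ j ≠ 0) :
    column R₂ j ≠ 0 ∧ lowM R₁ j = lowM R₂ j := by
  obtain ⟨i, hlow, -⟩ := exists_low_of_ne_zero hne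
  have hi : lowM R₁ j = ↑i := hlow
  have hC := (claimC h1 j i).mp ⟨hne, hi⟩
  rw [hIic, hIio] at hC
  obtain ⟨h2ne, h2low⟩ := (claimC h2 j i).mpr hC
  exact ⟨h2ne, by rw [hi, h2low]⟩

end LowPairingAux

open LowPairingAux in
/-- Uniqueness of the lowest-one pairing: if `R₁ = D·V₁` and `R₂ = D·V₂` are two
reduced forms of the same matrix `D` (with `V₁`, `V₂` upper-triangular with unit
diagonal), then for every index `j` the column `R₁_j` is zero iff the column `R₂_j`
is zero, and if both columns are nonzero they have the same lowest-one position. -/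
theorem low_pairing_unique {n : ℕ} (D V₁ V₂ : Matrix (Fin n) (Fin n) (ZMod 2))
    (hV₁ : IsUpperUnitriangular V₁) (hV₂ : IsUpperUnitriangular V₂)
    (hR₁ : ReducedMat (D * V₁)) (hR₂ : ReducedMat (D * V₂)) (j : Fin n) :
    (column (D * V₁) j = 0 ↔ column (D * V₂) j = 0) ∧
      (column (D * V₁) j ≠ 0 → column (D * V₂) j ≠ 0 →
        lowM (D * V₁) j = lowM (D * V₂) j) := by
  have hdc : ∀ s : Finset (Fin n), s = Finset.Iic j ∨ s = Finset.Iio j →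
      ∀ k ∈ s, ∀ m, m ≤ k → m ∈ s := by
    rintro s (rfl | rfl) k hk m hm
    · exact Finset.mem_Iic.mpr (le_trans hm (Finset.mem_Iic.mp hk))
    · exact Finset.mem_Iio.mpr (lt_of_le_of_lt hm (Finset.mem_Iio.mp hk))
  have hIic : spanCols (D * V₁) (Finset.Iic j) = spanCols (D * V₂) (Finset.Iic j) := by
    rw [spanCols_mul D V₁ hV₁ (hdc _ (Or.inl rfl)),
      spanCols_mul D V₂ hV₂ (hdc _ (Or.inl rfl))]
  have hIio : spanCols (D * V₁) (Finset.Iio j) = spanCols (D * V₂) (Finset.Iio j) := by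
    rw [spanCols_mul D V₁ hV₁ (hdc _ (Or.inr rfl)),
      spanCols_mul D V₂ hV₂ (hdc _ (Or.inr rfl))]
  constructor
  · constructor
    · intro h10
      by_contra h2ne
      exact (key_lemma hR₂ hR₁ j hIic.symm hIio.symm h2ne).1 h10
    · intro h20
      by_contra h1ne
      exact ((key_lemma hR₁ hR₂ j hIic hIio h1ne).1 h20)
  · intro h1 _
    exact (key_lemma hR₁ hR₂ j hIic hIio h1).2
end

section
/- Let g : Fin n → ℤ be a nondecreasing function and let D be an n×n matrix over ℤ/2 such that whenever D i j = 1 one has g i < g j (every cell has strictly larger filtration value than each of its faces). Let V be an upper-triangular n×n matrix over ℤ/2 with all diagonal entries equal to 1 such that R = D·V is reduced. Then for every index j with nonzero column R_j, g(low(R, j)) < g(j). (Optimality part of Theorem on the iterated Morse complex: every persistence pair of the iterated Morse complex has strictly positive persistence, i.e., no zero-length intervals occur.) -/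
/-- Optimality of the iterated Morse complex: if the cells are sorted by a
nondecreasing filtering function `g` and every cell has strictly larger filtration
value than each of its faces (`D i j = 1 → g i < g j`), then in any reduced form
`R = D·V` every persistence pair has strictly positive persistence:
`g (low(R, j)) < g j` for every nonzero column `j`. -/
theorem no_zero_persistence_pairs {n : ℕ} (g : Fin n → ℤ) (hg : Monotone g)
    (D V : Matrix (Fin n) (Fin n) (ZMod 2))
    (hD : ∀ i j : Fin n, D i j = 1 → g i < g j)
    (hV : IsUpperUnitriangular V) (hR : ReducedMat (D * V))
    (j : Fin n) (hj : column (D * V) j ≠ 0) (i : Fin n)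
    (hi : lowM (D * V) j = (i : WithBot (Fin n))) :
    g i < g j := by
  have hmem : i ∈ Finset.univ.filter (fun k => column (D * V) j k ≠ 0) :=
    Finset.mem_of_max hi
  have hRij : (D * V) i j ≠ 0 := (Finset.mem_filter.mp hmem).2
  have hsum : ∑ k, D i k * V k j ≠ 0 := by
    simpa [Matrix.mul_apply] using hRij
  obtain ⟨k, -, hk⟩ := Finset.exists_ne_zero_of_sum_ne_zero hsum
  have hDik : D i k ≠ 0 := fun h => hk (by simp [h])
  have hVkj : V k j ≠ 0 := fun h => hk (by simp [h])
  have hD1 : D i k = 1 := by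
    rcases (by decide : ∀ x : ZMod 2, x = 0 ∨ x = 1) (D i k) with h | h
    · exact absurd h hDik
    · exact h
  have hkj : k ≤ j := by
    by_contra h
    exact hVkj (hV.1 k j (lt_of_not_ge h))
  exact lt_of_lt_of_le (hD i k hD1) (hg hkj)
end
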